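/- arXiv:math/0201181 — 2 statements merged into one kernel-verified Lean document; each statement's English description precedes it below -/
import Mathlib

section
/- Let W be a ℤ₂-graded associative algebra with ℤ₂-graded center Z, D an odd super-derivation with D² = ad(R) for some even element R, and r an odd element. If the element Ω := R + Dr + r∘r lies in the graded center Z, then 𝒟 := D + ad(r) satisfies 𝒟² = 0. -/
/-!  STATEMENT 10: Flatness criterion for Fedosov derivatives.  In a
ℤ₂-graded associative algebra W, let D be an odd super-derivation with
D² = ad(R₀) for an even element R₀, and let r be odd.  If
Ω := R₀ + D r + r∘r lies in the graded center (for the even element Ω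
this means Ω commutes with everything), then 𝒟 := D + ad(r) satisfies
𝒟² = 0 (stated on homogeneous elements a of degree i; the element
D a + ad(r) a is homogeneous of degree i+1). -/

theorem fedosov_derivative_flat_of_central_curvature
    (R W : Type*) [CommRing R] [Ring W] [Algebra R W]
    (𝒜 : ZMod 2 → Submodule R W) [GradedAlgebra 𝒜]
    (D : W →ₗ[R] W)
    (hLeib : ∀ (i : ZMod 2), ∀ a ∈ 𝒜 i, ∀ b : W,
      D (a * b) = D a * b + ((-1 : ℤ) ^ i.val) • (a * D b))
    (hDdeg : ∀ (i : ZMod 2), ∀ a ∈ 𝒜 i, D a ∈ 𝒜 (i + 1))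
    (R₀ : W) (hR₀ : R₀ ∈ 𝒜 0)
    (hD2 : ∀ a : W, D (D a) = R₀ * a - a * R₀)
    (r : W) (hr : r ∈ 𝒜 1)
    (hΩcentral : ∀ w : W, (R₀ + D r + r * r) * w = w * (R₀ + D r + r * r))
    (i : ZMod 2) (a : W) (ha : a ∈ 𝒜 i) :
    D (D a + (r * a - ((-1 : ℤ) ^ i.val) • (a * r)))
      + (r * (D a + (r * a - ((-1 : ℤ) ^ i.val) • (a * r)))
          - ((-1 : ℤ) ^ (i + 1).val) •
            ((D a + (r * a - ((-1 : ℤ) ^ i.val) • (a * r))) * r))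
      = 0 := by
  have h1 : D (r * a) = D r * a - r * D a := by
    have := hLeib 1 r hr a
    simp only [show ((1 : ZMod 2)).val = 1 from rfl, pow_one, neg_smul, one_smul] at this
    rw [this]; abel
  have h2 : D (a * r) = D a * r + ((-1 : ℤ) ^ i.val) • (a * D r) := hLeib i a ha r
  have hc := hΩcentral a
  rw [map_add, map_sub, map_zsmul, hD2, h1, h2]
  rw [← sub_eq_zero] at hc
  rcases (show i = 0 ∨ i = 1 by fin_cases i <;> [exact Or.inl rfl; exact Or.inr rfl]) with rfl | rfl <;>
  · simp only [show ((0 : ZMod 2)).val = 0 from rfl, show ((1 : ZMod 2)).val = 1 from rfl,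
      show ((0 + 1 : ZMod 2)).val = 1 from rfl, show ((1 + 1 : ZMod 2)).val = 0 from rfl,
      pow_zero, pow_one, one_smul, neg_smul]
    rw [← hc]
    noncomm_ring
end

section
/- Let H: M × M → W be a sesquilinear pairing on a right-module M over a *-algebra W satisfying H(Ψ, Ψ'∘b) = H(Ψ,Ψ')∘b and H(Ψ,Ψ') = (H(Ψ',Ψ))*, and suppose 𝒟(H(Ψ,Ψ')) = H(𝒟^E Ψ, Ψ') + (−1)^{|Ψ|}H(Ψ, 𝒟^E Ψ') for flat derivations 𝒟, 𝒟^E with τ, τ^E the Fedosov–Taylor inverses of the symbol maps. Then h(s,s') := σ(H(τ^E(s), τ^E(s'))) satisfies h(s,s') = (h(s',s))* and h(s, s'• f) = h(s,s') ⋆ f, where s • f = σ^E(τ^E(s)∘τ(f)) and f ⋆ g = σ(τ(f)∘τ(g)). -/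
/-!  STATEMENT 19: Deformation of the Hermitian fiber metric,
abstractly.  H is a sesquilinear pairing on a right module M over a
*-algebra W, compatible with the right action
(H(Ψ, Ψ'∘b) = H(Ψ,Ψ')∘b), Hermitian (H(Ψ,Ψ') = H(Ψ',Ψ)*), and
compatible with the flat derivations:
𝒟(H(Ψ,Ψ')) = H(𝒟^EΨ,Ψ') + (−1)^{|Ψ|} H(Ψ,𝒟^EΨ') (the degree |Ψ| given
by a grading function deg).  Then the transported form
h(s,s') := σ(H(τ^E s, τ^E s')) is Hermitian and satisfies
h(s, s'•f) = h(s,s') ⋆ f, where s•f = σ^E(τ^E s ∘ τ f) and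
f ⋆ g = σ(τ f ∘ τ g). -/

theorem fedosov_deformed_hermitian_metric
    (W M B BE : Type*) [Ring W] [StarRing W] [AddCommGroup M] [Star B]
    (ract : M → W → M)
    (hract0l : ∀ b : W, ract 0 b = 0) (hract0r : ∀ Ψ : M, ract Ψ 0 = 0)
    (H : M → M → W)
    (hHaddl : ∀ Ψ₁ Ψ₂ Ψ : M, H (Ψ₁ + Ψ₂) Ψ = H Ψ₁ Ψ + H Ψ₂ Ψ)
    (hHaddr : ∀ Ψ Ψ₁ Ψ₂ : M, H Ψ (Ψ₁ + Ψ₂) = H Ψ Ψ₁ + H Ψ Ψ₂)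
    (hH1 : ∀ (Ψ Ψ' : M) (b : W), H Ψ (ract Ψ' b) = H Ψ Ψ' * b)
    (hH2 : ∀ Ψ Ψ' : M, H Ψ Ψ' = star (H Ψ' Ψ))
    (deg : M → ZMod 2)
    (D : W → W) (DE : M → M)
    (hcompat : ∀ Ψ Ψ' : M,
      D (H Ψ Ψ') = H (DE Ψ) Ψ' + ((-1 : ℤ) ^ (deg Ψ).val) • H Ψ (DE Ψ'))
    (hDEr : ∀ (Ψ : M) (b : W),
      DE (ract Ψ b) = ract (DE Ψ) b + ((-1 : ℤ) ^ (deg Ψ).val) • ract Ψ (D b))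
    (hD2 : ∀ b : W, D (D b) = 0) (hDE2 : ∀ Ψ : M, DE (DE Ψ) = 0)
    (σ : W → B) (τ : B → W) (σE : M → BE) (τE : BE → M)
    (hστ : ∀ f : B, σ (τ f) = f) (hτσ : ∀ w : W, D w = 0 → τ (σ w) = w)
    (hDτ : ∀ f : B, D (τ f) = 0)
    (hστE : ∀ s : BE, σE (τE s) = s) (hτσE : ∀ Ψ : M, DE Ψ = 0 → τE (σE Ψ) = Ψ)
    (hDEτE : ∀ s : BE, DE (τE s) = 0)
    (hσstar : ∀ w : W, σ (star w) = star (σ w)) :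
    -- h(s,s') = h(s',s)*
    (∀ s s' : BE, σ (H (τE s) (τE s')) = star (σ (H (τE s') (τE s)))) ∧
    -- h(s, s'•f) = h(s,s') ⋆ f
    (∀ (s s' : BE) (f : B),
      σ (H (τE s) (τE (σE (ract (τE s') (τ f)))))
        = σ (τ (σ (H (τE s) (τE s'))) * τ f)) := by
  have hH0l : ∀ Ψ : M, H 0 Ψ = 0 := by
    intro Ψ
    have h := hHaddl 0 0 Ψ
    rw [add_zero] at h
    exact left_eq_add.mp h
  have hH0r : ∀ Ψ : M, H Ψ 0 = 0 := by
    intro Ψ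
    have h := hHaddr Ψ 0 0
    rw [add_zero] at h
    exact left_eq_add.mp h
  -- D (H (τE s) (τE s')) = 0
  have hDH : ∀ s s' : BE, D (H (τE s) (τE s')) = 0 := by
    intro s s'
    rw [hcompat, hDEτE, hDEτE, hH0l, hH0r, smul_zero, add_zero]
  constructor
  · intro s s'
    rw [hH2, hσstar]
  · intro s s' f
    have hfix : τE (σE (ract (τE s') (τ f))) = ract (τE s') (τ f) := by
      apply hτσE
      rw [hDEr, hDEτE, hract0l, hDτ, hract0r, smul_zero, add_zero]
    rw [hfix, hH1, hτσ _ (hDH s s')]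
end
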